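/- arXiv:2304.03706 — 8 statements merged into one kernel-verified Lean document; each statement's English description precedes it below -/
import Mathlib

section
/- Let G = (V, E) be a strongly connected finite directed graph with |V| ≥ 2. Then there exists a probability distribution over the simple directed cycles of G such that for every vertex j and every pair of edges (i₁, j), (i₂, j) ∈ E, the total probability of cycles containing the edge (i₁, j) equals the total probability of cycles containing the edge (i₂, j), and moreover every edge of G is contained in some cycle of positive probability. -/
/-!
Choose weights `m v > 0` with `indeg v * m v = ∑_{v → b} m b`, i.e. a positive kernel vector of
`diag (column sums of A) - A` for the adjacency matrix `A`. This matrix is singular because its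
column sums vanish; the positive part of a kernel vector is again one, because at every vertex its
inflow is at most its outflow while the two totals agree; and positivity spreads backwards along
edges, hence everywhere by strong connectivity. Then `F a b = m b` on the edges is an integer
circulation. Peeling off simple cycles of its support writes it as a sum of cycles, and the uniform
distribution on these cycles gives every edge into `j` the mass `m j / r`.
-/

open scoped Classical

/-- `c` is a simple directed cycle in the directed graph with edge relation `E`:
a nonempty duplicate-free list of vertices with an edge from each vertex to the
cyclically next one. -/
def IsSimpleCycle {V : Type*} (E : V → V → Prop) (c : List V) : Prop :=
  c ≠ [] ∧ c.Nodup ∧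
    ∀ i : Fin c.length, E (c.get i) (c.get ⟨(i.val + 1) % c.length, Nat.mod_lt _ i.pos⟩)

/-- The directed edge `(a, b)` is contained in the cycle given by the list `c`. -/
def EdgeInCycle {V : Type*} (c : List V) (a b : V) : Prop :=
  ∃ i : Fin c.length,
    c.get i = a ∧ c.get ⟨(i.val + 1) % c.length, Nat.mod_lt _ i.pos⟩ = b

open Function

section Cycles
variable {V : Type*}

lemma Fin.mk_succ_mod_eq_finRotate {n : ℕ} (i : Fin n) :
    (⟨(i.val + 1) % n, Nat.mod_lt _ i.pos⟩ : Fin n) = finRotate n i := by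
  have := i.neZero
  ext
  simp [Fin.val_add]

lemma edgeInCycle_iff {c : List V} {a b : V} :
    EdgeInCycle c a b ↔ ∃ i, c.get i = a ∧ c.get (finRotate _ i) = b := by
  simp only [EdgeInCycle, Fin.mk_succ_mod_eq_finRotate]

lemma IsSimpleCycle.mono {R S : V → V → Prop} {c : List V} (hRS : ∀ a b, R a b → S a b)
    (hc : IsSimpleCycle R c) : IsSimpleCycle S c :=
  ⟨hc.1, hc.2.1, fun i => hRS _ _ (hc.2.2 i)⟩

lemma IsSimpleCycle.rel_of_edgeInCycle {R : V → V → Prop} {c : List V} {a b : V}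
    (hc : IsSimpleCycle R c) (h : EdgeInCycle c a b) : R a b := by
  obtain ⟨i, rfl, rfl⟩ := h
  exact hc.2.2 i

lemma IsSimpleCycle.ite_edgeInCycle_le {F : V → V → ℕ} {c : List V}
    (hc : IsSimpleCycle (fun x y => 0 < F x y) c) (x y : V) :
    (if EdgeInCycle c x y then 1 else 0) ≤ F x y := by
  split_ifs with hxy
  exacts [hc.rel_of_edgeInCycle hxy, Nat.zero_le _]

lemma EdgeInCycle.mem_left {c : List V} {a b : V} (h : EdgeInCycle c a b) : a ∈ c := by
  obtain ⟨i, rfl, -⟩ := h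
  exact List.get_mem c i

lemma EdgeInCycle.mem_right {c : List V} {a b : V} (h : EdgeInCycle c a b) : b ∈ c := by
  obtain ⟨i, -, rfl⟩ := h
  exact List.get_mem c _

lemma List.Nodup.sum_edgeInCycle_in_eq_out [Fintype V] {c : List V} (hc : c.Nodup) (v : V) :
    ∑ a, (if EdgeInCycle c a v then 1 else 0 : ℕ) = ∑ b, if EdgeInCycle c v b then 1 else 0 := by
  by_cases hv : v ∈ c
  · obtain ⟨k, rfl⟩ := List.get_of_mem hv
    have hinj := List.nodup_iff_injective_get.mp hc
    have hin : ∀ a, EdgeInCycle c a (c.get k) ↔ a = c.get ((finRotate _).symm k) := by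
      intro a
      simp only [edgeInCycle_iff, hinj.eq_iff, ← Equiv.eq_symm_apply]
      exact ⟨fun ⟨i, hi, hik⟩ => hik ▸ hi.symm, fun h => ⟨_, h.symm, rfl⟩⟩
    have hout : ∀ b, EdgeInCycle c (c.get k) b ↔ b = c.get (finRotate _ k) := by
      intro b
      simp only [edgeInCycle_iff, hinj.eq_iff]
      exact ⟨fun ⟨i, hik, hi⟩ => hik ▸ hi.symm, fun h => ⟨k, rfl, h.symm⟩⟩
    simp only [hin, hout, Finset.sum_ite_eq', Finset.mem_univ, if_true]
  · have hnot : ∀ a, ¬EdgeInCycle c a v ∧ ¬EdgeInCycle c v a := fun a =>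
      ⟨fun h => hv h.mem_right, fun h => hv h.mem_left⟩
    simp [hnot]

end Cycles

section PeriodicOrbit
variable {α : Type*}

lemma Function.exists_iterate_mem_periodicPts [Finite α] (f : α → α) (x : α) :
    ∃ n, f^[n] x ∈ periodicPts f := by
  obtain ⟨m, n, hmn, h⟩ := Finite.exists_ne_map_eq_of_infinite (f^[·] x)
  wlog hlt : m < n generalizing m n
  · exact this n m hmn.symm h.symm (by omega)
  refine ⟨m, mk_mem_periodicPts (Nat.sub_pos_of_lt hlt) ?_⟩
  change f^[n - m] (f^[m] x) = f^[m] x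
  rw [← iterate_add_apply, Nat.sub_add_cancel hlt.le]
  exact h.symm

lemma isSimpleCycle_periodicOrbit {R : α → α → Prop} {f : α → α} {y : α}
    (hy : y ∈ periodicPts f) (hR : ∀ k, R (f^[k] y) (f (f^[k] y))) :
    IsSimpleCycle R ((List.range (minimalPeriod f y)).map (f^[·] y)) := by
  have hpos := minimalPeriod_pos_of_mem_periodicPts hy
  refine ⟨by simpa using hpos.ne', List.nodup_range.map_on fun i hi j hj h =>
    iterate_injOn_Iio_minimalPeriod (by simpa using hi) (by simpa using hj) h, fun i => ?_⟩
  simp only [List.get_eq_getElem, List.getElem_map, List.getElem_range, List.length_map,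
    List.length_range, iterate_mod_minimalPeriod_eq, iterate_succ_apply']
  exact hR i

lemma exists_isSimpleCycle_of_forall_exists_rel [Finite α] {R : α → α → Prop} {S : Set α}
    (hS : S.Nonempty) (h : ∀ x ∈ S, ∃ y ∈ S, R x y) : ∃ c, IsSimpleCycle R c := by
  choose! f hfS hfR using h
  obtain ⟨x, hx⟩ := hS
  obtain ⟨n, hn⟩ := exists_iterate_mem_periodicPts f x
  have hmaps : Set.MapsTo f S S := hfS
  exact ⟨_, isSimpleCycle_periodicOrbit hn fun k => hfR _ (hmaps.iterate k (hmaps.iterate n hx))⟩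

end PeriodicOrbit

def IsCirculation {V M : Type*} [Fintype V] [AddCommMonoid M] (F : V → V → M) : Prop :=
  ∀ v, ∑ a, F a v = ∑ b, F v b

section Circulation
variable {V : Type*} [Fintype V]

lemma isCirculation_of_forall_sum_le {M : Type*} [AddCommMonoid M] [PartialOrder M]
    [IsOrderedCancelAddMonoid M] {F : V → V → M} (h : ∀ v, ∑ a, F a v ≤ ∑ b, F v b) :
    IsCirculation F := fun v =>
  (Finset.sum_eq_sum_iff_of_le fun v _ => h v).1 Finset.sum_comm v (Finset.mem_univ v)

lemma IsCirculation.exists_out_pos_of_in_pos {F : V → V → ℕ} (hF : IsCirculation F) {u v : V}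
    (huv : 0 < F u v) : ∃ w, 0 < F v w := by
  have hout : ∑ w, F v w ≠ 0 := by
    rw [← hF v]
    exact (huv.trans_le (Finset.single_le_sum (f := (F · v)) (fun _ _ => Nat.zero_le _)
      (Finset.mem_univ u))).ne'
  obtain ⟨w, -, hw⟩ := Finset.exists_ne_zero_of_sum_ne_zero hout
  exact ⟨w, Nat.pos_of_ne_zero hw⟩

lemma IsCirculation.tsub_edgeInCycle {F : V → V → ℕ} (hF : IsCirculation F) {c : List V}
    (hc : IsSimpleCycle (fun x y => 0 < F x y) c) :
    IsCirculation fun x y => F x y - if EdgeInCycle c x y then 1 else 0 := fun v => by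
  rw [Finset.sum_tsub_distrib _ fun x _ => hc.ite_edgeInCycle_le x v,
    Finset.sum_tsub_distrib _ fun y _ => hc.ite_edgeInCycle_le v y, hF v,
    hc.2.1.sum_edgeInCycle_in_eq_out v]

theorem IsCirculation.exists_cycle_decomposition {E : V → V → Prop} {F : V → V → ℕ}
    (hF : IsCirculation F) (hFE : ∀ a b, 0 < F a b → E a b) :
    ∃ cs : List (List V), (∀ c ∈ cs, IsSimpleCycle E c) ∧
      ∀ a b, cs.countP (fun c => EdgeInCycle c a b) = F a b := by
  induction h : ∑ a, ∑ b, F a b using Nat.strong_induction_on generalizing F with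
  | _ N ih =>
  by_cases hzero : ∀ a b, F a b = 0
  · exact ⟨[], by simp, by simp [hzero]⟩
  push Not at hzero
  obtain ⟨a, b, hab⟩ := hzero
  obtain ⟨c, hc⟩ : ∃ c, IsSimpleCycle (fun x y => 0 < F x y) c :=
    exists_isSimpleCycle_of_forall_exists_rel (S := {y | ∃ x, 0 < F x y})
      ⟨b, a, Nat.pos_of_ne_zero hab⟩ fun x ⟨u, hu⟩ =>
        (hF.exists_out_pos_of_in_pos hu).imp fun y hy => ⟨⟨x, hy⟩, hy⟩
  have hlt : ∑ x, ∑ y, (F x y - if EdgeInCycle c x y then 1 else 0) < N := by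
    set i₀ : Fin c.length := ⟨0, List.length_pos_iff.2 hc.1⟩
    have hedge : EdgeInCycle c (c.get i₀) (c.get (finRotate _ i₀)) :=
      edgeInCycle_iff.2 ⟨i₀, rfl, rfl⟩
    rw [← h]
    refine Finset.sum_lt_sum (fun x _ => Finset.sum_le_sum fun y _ => Nat.sub_le _ _)
      ⟨c.get i₀, Finset.mem_univ _, Finset.sum_lt_sum (fun y _ => Nat.sub_le _ _)
        ⟨c.get (finRotate _ i₀), Finset.mem_univ _, ?_⟩⟩
    exact Nat.sub_lt (hc.rel_of_edgeInCycle hedge) (by simp only [if_pos hedge, Nat.one_pos])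
  obtain ⟨cs, hcs, hcount⟩ := ih _ hlt (hF.tsub_edgeInCycle hc)
    (fun x y hxy => hFE x y (hxy.trans_le (Nat.sub_le _ _))) rfl
  refine ⟨c :: cs, ?_, fun x y => ?_⟩
  · simp only [List.mem_cons, forall_eq_or_imp]
    exact ⟨hc.mono hFE, hcs⟩
  · have := hc.ite_edgeInCycle_le x y
    simp only [List.countP_cons, hcount, decide_eq_true_eq] at this ⊢
    omega

end Circulation

section PositiveCirculation
open Matrix
variable {ι R : Type*} [Fintype ι]

theorem Matrix.exists_ne_zero_isCirculation [CommRing R] [IsDomain R] [Nonempty ι]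
    (A : Matrix ι ι R) : ∃ x : ι → R, x ≠ 0 ∧ IsCirculation fun i j => A i j * x j := by
  set L : Matrix ι ι R := diagonal (fun v => ∑ a, A a v) - A
  have hL : (fun _ => (1 : R)) ᵥ* L = 0 := by
    ext j
    rw [vecMul_sub, Pi.sub_apply, vecMul_diagonal, one_mul, Pi.zero_apply, sub_eq_zero]
    simp [vecMul, dotProduct]
  obtain ⟨x, hx0, hx⟩ := exists_mulVec_eq_zero_iff.2 <| exists_vecMul_eq_zero_iff.1
    ⟨_, Function.ne_iff.2 ⟨Classical.arbitrary ι, one_ne_zero⟩, hL⟩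
  refine ⟨x, hx0, fun v => ?_⟩
  have := congrFun hx v
  rw [sub_mulVec, Pi.sub_apply, mulVec_diagonal, Pi.zero_apply, sub_eq_zero, Finset.sum_mul] at this
  exact this

variable [CommRing R] [LinearOrder R] [IsStrictOrderedRing R] {A : Matrix ι ι R}

lemma IsCirculation.mul_posPart (hA : ∀ i j, 0 ≤ A i j) {x : ι → R}
    (hx : IsCirculation fun i j => A i j * x j) : IsCirculation fun i j => A i j * x⁺ j := by
  refine isCirculation_of_forall_sum_le fun v => ?_
  simp only [Pi.posPart_apply]
  rcases le_or_gt (x v) 0 with hv | hv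
  · rw [posPart_eq_zero.2 hv]
    simp only [mul_zero, Finset.sum_const_zero]
    exact Finset.sum_nonneg fun j _ => mul_nonneg (hA v j) (posPart_nonneg _)
  · rw [posPart_eq_self.2 hv.le, hx v]
    exact Finset.sum_le_sum fun j _ => mul_le_mul_of_nonneg_left (le_posPart _) (hA v j)

lemma IsCirculation.pos_of_mul (hA : ∀ i j, 0 ≤ A i j) {x : ι → R} (hx0 : ∀ i, 0 ≤ x i)
    (hx : IsCirculation fun i j => A i j * x j) {i j : ι} (hij : 0 < A i j) (hj : 0 < x j) :
    0 < x i := by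
  have hout : 0 < ∑ k, A i k * x k :=
    (mul_pos hij hj).trans_le (Finset.single_le_sum (f := fun k => A i k * x k)
      (fun k _ => mul_nonneg (hA i k) (hx0 k)) (Finset.mem_univ j))
  rw [← hx i, ← Finset.sum_mul] at hout
  exact pos_of_mul_pos_right hout (Finset.sum_nonneg fun a _ => hA a i)

theorem Matrix.exists_pos_isCirculation [Nonempty ι] (hA : ∀ i j, 0 ≤ A i j)
    (hirr : ∀ i j, Relation.ReflTransGen (fun i j => 0 < A i j) i j) :
    ∃ x : ι → R, (∀ i, 0 < x i) ∧ IsCirculation fun i j => A i j * x j := by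
  obtain ⟨x, hx0, hx⟩ := A.exists_ne_zero_isCirculation
  obtain ⟨y, hy0, hy_ne, hy⟩ : ∃ y : ι → R, 0 ≤ y ∧ y ≠ 0 ∧ IsCirculation fun i j => A i j * y j := by
    by_cases hpos : x⁺ = 0
    · have hneg : IsCirculation fun i j => A i j * (-x) j := fun v => by
        simpa [Finset.sum_neg_distrib] using hx v
      refine ⟨(-x)⁺, posPart_nonneg _, ?_, hneg.mul_posPart hA⟩
      rw [posPart_eq_self.2 (neg_nonneg.2 (posPart_eq_zero.1 hpos))]
      exact neg_ne_zero.2 hx0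
    · exact ⟨x⁺, posPart_nonneg _, hpos, hx.mul_posPart hA⟩
  obtain ⟨i₀, hi₀⟩ : ∃ i₀, 0 < y i₀ := by
    by_contra! h
    exact hy_ne (le_antisymm h hy0)
  refine ⟨y, fun i => ?_, hy⟩
  induction hirr i i₀ using Relation.ReflTransGen.head_induction_on with
  | refl => exact hi₀
  | head hij _ hj => exact hy.pos_of_mul hA hy0 hij hj

end PositiveCirculation

theorem exists_pos_nat_weights_isCirculation {V : Type*} [Fintype V] [Nonempty V]
    (E : V → V → Prop) (hconn : ∀ u v : V, Relation.ReflTransGen E u v) :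
    ∃ m : V → ℕ, (∀ v, 0 < m v) ∧ IsCirculation fun a b => if E a b then m b else 0 := by
  set A : Matrix V V ℤ := Matrix.of fun a b => if E a b then 1 else 0
  have hA_pos : (fun a b => 0 < A a b) = E := by
    ext a b
    by_cases h : E a b <;> simp [A, h]
  obtain ⟨x, hx_pos, hx⟩ := A.exists_pos_isCirculation
    (fun a b => by by_cases h : E a b <;> simp [A, h]) (hA_pos ▸ hconn)
  lift x to V → ℕ using fun v => (hx_pos v).le
  refine ⟨x, fun v => Int.natCast_pos.1 (hx_pos v), fun v => ?_⟩
  have := hx v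
  simp only [A, Matrix.of_apply, ite_mul, one_mul, zero_mul] at this
  exact_mod_cast this

lemma List.sum_fin_ite_get_eq_countP_mul {α M : Type*} [NonAssocSemiring M] (l : List α)
    (P : α → Prop) (x : M) :
    ∑ t : Fin l.length, (if P (l.get t) then x else 0) = l.countP (fun c => P c) * x := by
  refine (Fin.sum_univ_fun_getElem l (fun c => if P c then x else 0)).trans ?_
  induction l with
  | nil => simp
  | cons a l ih => by_cases h : P a <;> simp [h, ih, add_mul, add_comm]

/-- For a strongly connected finite directed graph with at least two vertices,
there is a probability distribution over its simple directed cycles such that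
for every vertex `j` and any two edges `(i₁, j)` and `(i₂, j)`, the total
probability of cycles containing `(i₁, j)` equals that of cycles containing
`(i₂, j)`; moreover every edge lies on some cycle of positive probability. -/
theorem stmt_5 {V : Type*} [Fintype V] (E : V → V → Prop)
    (hconn : ∀ u v : V, Relation.ReflTransGen E u v)
    (hcard : 2 ≤ Fintype.card V) :
    ∃ (r : ℕ) (c : Fin r → List V) (p : Fin r → ℝ),
      (∀ t, IsSimpleCycle E (c t)) ∧ (∀ t, 0 < p t) ∧ (∑ t, p t = 1) ∧
      (∀ j i₁ i₂ : V, E i₁ j → E i₂ j →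
        (∑ t, if EdgeInCycle (c t) i₁ j then p t else 0) =
          (∑ t, if EdgeInCycle (c t) i₂ j then p t else 0)) ∧
      (∀ a b : V, E a b → ∃ t, EdgeInCycle (c t) a b) := by
  obtain ⟨u, w, huw⟩ := Fintype.exists_pair_of_one_lt_card hcard
  obtain ⟨a₀, b₀, hab₀⟩ : ∃ a b, E a b := by
    rcases (hconn u w).cases_head with h | ⟨b, hub, -⟩
    · exact absurd h huw
    · exact ⟨u, b, hub⟩
  have : Nonempty V := ⟨u⟩
  obtain ⟨m, hm_pos, hm⟩ := exists_pos_nat_weights_isCirculation E hconn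
  obtain ⟨cs, hcs, hcount⟩ := hm.exists_cycle_decomposition (E := E) fun a b h => by
    by_contra hab
    simp [hab] at h
  have hcount_edge : ∀ a b, E a b → cs.countP (fun c => EdgeInCycle c a b) = m b := by
    intro a b hab
    simp [hcount, hab]
  have hlen : 0 < cs.length :=
    (hcount_edge a₀ b₀ hab₀ ▸ hm_pos b₀).trans_le List.countP_le_length
  refine ⟨cs.length, cs.get, fun _ => (cs.length : ℝ)⁻¹, fun t => hcs _ (List.get_mem _ _),
    fun _ => by positivity, ?_, ?_, ?_⟩
  · simp [hlen.ne']
  · intro j i₁ i₂ h₁ h₂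
    rw [cs.sum_fin_ite_get_eq_countP_mul (EdgeInCycle · i₁ j),
      cs.sum_fin_ite_get_eq_countP_mul (EdgeInCycle · i₂ j), hcount_edge _ _ h₁,
      hcount_edge _ _ h₂]
  · intro a b hab
    obtain ⟨c, hc, hedge⟩ := List.countP_pos_iff.1 (hcount_edge a b hab ▸ hm_pos b)
    obtain ⟨t, rfl⟩ := List.get_of_mem hc
    exact ⟨t, by simpa using hedge⟩
end

section
/- Let v : 2^M → ℝ≥0 be a monotone subadditive valuation on a finite set M of items. Let (X₁, X₂) be a partition of M with v(X₁) ≥ v(X₂) that minimizes |v(X₁) − v(X₂)| among all partitions and, subject to that, minimizes |X₁|. Then (X₁, X₂) is a (1/2)-EFX partition: for every item g ∈ X₁, v(X₂) ≥ (1/2)·v(X₁ − g), and for every item g ∈ X₂, v(X₁) ≥ (1/2)·v(X₂ − g). -/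
/-- A partition `(X₁, X₂)` of the items for a monotone subadditive valuation
`v`, with `v X₁ ≥ v X₂`, minimizing `|v X₁ - v X₂|` and then `|X₁|`, is a
`(1/2)`-EFX partition. -/
theorem stmt_7 {α : Type*} [Fintype α] [DecidableEq α] (v : Finset α → ℝ)
    (hnn : ∀ S, 0 ≤ v S) (hmono : ∀ S T : Finset α, S ⊆ T → v S ≤ v T)
    (hsub : ∀ S T : Finset α, v (S ∪ T) ≤ v S + v T)
    (X₁ X₂ : Finset α) (hpart : X₁ ∪ X₂ = Finset.univ) (hdisj : Disjoint X₁ X₂)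
    (hord : v X₂ ≤ v X₁)
    (hmin : ∀ Y₁ Y₂ : Finset α, Y₁ ∪ Y₂ = Finset.univ → Disjoint Y₁ Y₂ →
      v Y₂ ≤ v Y₁ →
      |v X₁ - v X₂| ≤ |v Y₁ - v Y₂| ∧
        (|v X₁ - v X₂| = |v Y₁ - v Y₂| → X₁.card ≤ Y₁.card)) :
    (∀ g ∈ X₁, (1 / 2) * v (X₁.erase g) ≤ v X₂) ∧
      (∀ g ∈ X₂, (1 / 2) * v (X₂.erase g) ≤ v X₁) := by
  have habs : |v X₁ - v X₂| = v X₁ - v X₂ := abs_of_nonneg (by linarith)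
  constructor
  · intro g hg
    set A := X₁.erase g with hA
    set B := insert g X₂ with hB
    have hmem : ∀ x : α, x ∈ X₁ ∨ x ∈ X₂ := by
      intro x
      have : x ∈ X₁ ∪ X₂ := hpart ▸ Finset.mem_univ x
      simpa [Finset.mem_union] using this
    have hunion : A ∪ B = Finset.univ := by
      ext x
      simp only [hA, hB, Finset.mem_union, Finset.mem_erase, Finset.mem_insert,
        Finset.mem_univ, iff_true]
      by_cases hx : x = g
      · tauto
      · rcases hmem x with h | h
        · exact Or.inl ⟨hx, h⟩
        · exact Or.inr (Or.inr h)
    have hdisj' : Disjoint A B := by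
      rw [hB, Finset.disjoint_insert_right]
      exact ⟨Finset.notMem_erase g X₁, Finset.disjoint_of_subset_left (Finset.erase_subset g X₁) hdisj⟩
    have hAle : v A ≤ v X₁ := hmono _ _ (Finset.erase_subset g X₁)
    have hBle : v X₂ ≤ v B := hmono _ _ (Finset.subset_insert g X₂)
    have hgX₁ : v {g} ≤ v X₁ := hmono _ _ (Finset.singleton_subset_iff.mpr hg)
    have hBsub : v B ≤ v {g} + v X₂ := by
      have : v ({g} ∪ X₂) ≤ v {g} + v X₂ := hsub _ _
      simpa [← Finset.insert_eq] using this
    by_cases hcase : v B ≤ v A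
    · exfalso
      obtain ⟨h1, h2⟩ := hmin A B hunion hdisj' hcase
      have habs' : |v A - v B| = v A - v B := abs_of_nonneg (by linarith)
      rw [habs, habs'] at h1 h2
      have heq : v X₁ - v X₂ = v A - v B := le_antisymm h1 (by linarith)
      have hcard := h2 heq
      rw [hA] at hcard
      have := Finset.card_erase_lt_of_mem hg
      omega
    · push_neg at hcase
      have hunion' : B ∪ A = Finset.univ := by rw [Finset.union_comm]; exact hunion
      obtain ⟨h1, _⟩ := hmin B A hunion' hdisj'.symm hcase.le
      rw [habs, abs_of_nonneg (by linarith : (0:ℝ) ≤ v B - v A)] at h1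
      linarith
  · intro g hg
    have h1 : v (X₂.erase g) ≤ v X₂ := hmono _ _ (Finset.erase_subset g X₂)
    have h2 := hnn (X₂.erase g)
    linarith
end

section
/- There exists a monotone submodular valuation v on three items {a, b, c} such that the unique partition (X₁, X₂) minimizing |v(X₁) − v(X₂)| with v(X₁) ≥ v(X₂) satisfies: for every β > 1/(2 − ε) (for the given ε > 0 defining v), the partition is not a β-EFX partition; concretely, with v given by v(∅)=0, v(a)=v(b)=2−ε, v(c)=1, v(ab)=2−ε, v(ac)=v(bc)=v(abc)=3−ε, the partition X₁ = {a,b}, X₂ = {c} satisfies v(X₁ − b) = (2−ε)·v(X₂). -/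
noncomputable def myv (ε : ℝ) (S : Finset (Fin 3)) : ℝ :=
  if S = ∅ then 0 else if S = {2} then 1 else if 2 ∈ S then 3 - ε else 2 - ε

/-- There is a monotone submodular valuation on three items `a = 0`, `b = 1`,
`c = 2` such that the unique partition `(X₁, X₂) = ({a,b}, {c})` minimizing
`|v X₁ - v X₂|` (with `v X₁ ≥ v X₂`) satisfies `v (X₁ - b) = (2 - ε) · v X₂`,
hence it is not a `β`-EFX partition for any `β > 1/(2 - ε)`. -/
theorem stmt_8 (ε : ℝ) (hε0 : 0 < ε) (hε1 : ε < 1) :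
    ∃ v : Finset (Fin 3) → ℝ,
      (∀ S, 0 ≤ v S) ∧
      (∀ S T : Finset (Fin 3), S ⊆ T → v S ≤ v T) ∧
      (∀ (S T : Finset (Fin 3)) (x : Fin 3), S ⊆ T → x ∉ T →
        v (insert x T) - v T ≤ v (insert x S) - v S) ∧
      v ∅ = 0 ∧ v {0} = 2 - ε ∧ v {1} = 2 - ε ∧ v {2} = 1 ∧
      v {0, 1} = 2 - ε ∧ v {0, 2} = 3 - ε ∧ v {1, 2} = 3 - ε ∧
      v {0, 1, 2} = 3 - ε ∧
      -- ({0,1}, {2}) is the unique minimizer of |v Y₁ - v Y₂| over ordered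
      -- partitions with v Y₁ ≥ v Y₂
      (∀ Y₁ Y₂ : Finset (Fin 3), Y₁ ∪ Y₂ = Finset.univ → Disjoint Y₁ Y₂ →
        v Y₂ ≤ v Y₁ →
        |v {0, 1} - v {2}| ≤ |v Y₁ - v Y₂| ∧
          (|v {0, 1} - v {2}| = |v Y₁ - v Y₂| → Y₁ = {0, 1} ∧ Y₂ = {2})) ∧
      -- the key equality: v(X₁ − b) = (2 − ε) · v(X₂)
      v (({0, 1} : Finset (Fin 3)).erase 1) = (2 - ε) * v {2} ∧
      -- hence not a β-EFX partition for any β > 1/(2−ε)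
      (∀ β : ℝ, 1 / (2 - ε) < β →
        ¬((∀ g ∈ ({2} : Finset (Fin 3)),
            β * v (({2} : Finset (Fin 3)).erase g) ≤ v {0, 1}) ∧
          (∀ g ∈ ({0, 1} : Finset (Fin 3)),
            β * v (({0, 1} : Finset (Fin 3)).erase g) ≤ v {2}))) := by
  refine ⟨myv ε, ?_, ?_, ?_, ?_, ?_, ?_, ?_, ?_, ?_, ?_, ?_, ?_, ?_, ?_⟩
  · intro S; fin_cases S <;> simp (config := { decide := true }) [myv] <;> norm_num <;> linarith
  · intro S T hST; fin_cases S <;> fin_cases T <;>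
      simp_all (config := { decide := true }) [myv, Finset.subset_iff] <;> norm_num <;> linarith
  · intro S T x hST hx; fin_cases x <;> fin_cases S <;> fin_cases T <;>
      simp_all (config := { decide := true }) [myv, Finset.subset_iff] <;> norm_num <;> linarith
  · simp (config := { decide := true }) [myv]
  · simp (config := { decide := true }) [myv]
  · simp (config := { decide := true }) [myv]
  · simp (config := { decide := true }) [myv]
  · simp (config := { decide := true }) [myv]
  · simp (config := { decide := true }) [myv]
  · simp (config := { decide := true }) [myv]
  · simp (config := { decide := true }) [myv]
  · intro Y₁ Y₂ hu hd hle
    fin_cases Y₁ <;> fin_cases Y₂ <;>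
      simp_all (config := { decide := true }) [myv, Finset.ext_iff] <;>
      first
        | linarith
        | (rw [abs_of_nonneg (by linarith), abs_of_nonneg (by linarith)]; linarith)
        | (refine ⟨?_, fun h => ?_⟩ <;>
            [ (rw [abs_of_nonneg (by linarith), abs_of_nonneg (by linarith)]; linarith);
              (rw [abs_of_nonneg (by linarith), abs_of_nonneg (by linarith)] at h;
                first | trivial | simp_all | linarith) ])
  · simp (config := { decide := true }) [myv]
  · rintro β hβ ⟨h1, h2⟩
    have h := h2 1 (by decide)
    simp (config := { decide := true }) [myv] at h
    have h2ε : (0:ℝ) < 2 - ε := by linarith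
    have := (div_lt_iff₀ h2ε).mp hβ
    nlinarith
end

section
/- Let v : 2^M → ℝ≥0 be a monotone additive valuation on a finite set M. Let (X₁, X₂) be a partition of M with v(X₁) ≥ v(X₂) that minimizes |v(X₁) − v(X₂)| among all partitions and, subject to that, minimizes |X₁|. Then (X₁, X₂) is an EFX partition: for every g ∈ X₁, v(X₁ − g) ≤ v(X₂), and for every g ∈ X₂, v(X₂ − g) ≤ v(X₁). -/
/-- A partition `(X₁, X₂)` of the items for an additive valuation `v`, with
`v X₁ ≥ v X₂`, minimizing `|v X₁ - v X₂|` and then `|X₁|`, is an EFX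
partition. -/
theorem stmt_9 {α : Type*} [Fintype α] [DecidableEq α] (f : α → ℝ)
    (hf : ∀ x, 0 ≤ f x) (v : Finset α → ℝ) (hadd : ∀ S : Finset α, v S = ∑ x ∈ S, f x)
    (X₁ X₂ : Finset α) (hpart : X₁ ∪ X₂ = Finset.univ) (hdisj : Disjoint X₁ X₂)
    (hord : v X₂ ≤ v X₁)
    (hmin : ∀ Y₁ Y₂ : Finset α, Y₁ ∪ Y₂ = Finset.univ → Disjoint Y₁ Y₂ →
      v Y₂ ≤ v Y₁ →
      |v X₁ - v X₂| ≤ |v Y₁ - v Y₂| ∧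
        (|v X₁ - v X₂| = |v Y₁ - v Y₂| → X₁.card ≤ Y₁.card)) :
    (∀ g ∈ X₁, v (X₁.erase g) ≤ v X₂) ∧
      (∀ g ∈ X₂, v (X₂.erase g) ≤ v X₁) := by
  constructor
  · intro g hg
    by_contra hcon
    push_neg at hcon
    have hgX₂ : g ∉ X₂ := Finset.disjoint_left.mp hdisj hg
    have hvE : v (X₁.erase g) = v X₁ - f g := by
      rw [hadd, hadd, Finset.sum_erase_eq_sub hg]
    have hvI : v (insert g X₂) = f g + v X₂ := by
      rw [hadd, hadd, Finset.sum_insert hgX₂]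
    have hunion : X₁.erase g ∪ insert g X₂ = Finset.univ := by
      ext x
      simp only [Finset.mem_union, Finset.mem_erase, Finset.mem_insert, Finset.mem_univ,
        iff_true]
      by_cases hx : x = g
      · tauto
      · have : x ∈ X₁ ∪ X₂ := hpart ▸ Finset.mem_univ x
        simp only [Finset.mem_union] at this
        tauto
    have hdisj' : Disjoint (X₁.erase g) (insert g X₂) := by
      rw [Finset.disjoint_left]
      intro x hx hx'
      rcases Finset.mem_insert.mp hx' with h | h
      · exact (Finset.mem_erase.mp hx).1 h
      · exact Finset.disjoint_left.mp hdisj (Finset.mem_erase.mp hx).2 h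
    have hfg : f g < v X₁ - v X₂ := by linarith [hvE]
    have habs : |v X₁ - v X₂| = v X₁ - v X₂ := abs_of_nonneg (by linarith)
    by_cases hc : f g + v X₂ ≤ v X₁ - f g
    · -- new big side is the erase
      obtain ⟨h1, h2⟩ := hmin (X₁.erase g) (insert g X₂) hunion hdisj'
        (by rw [hvE, hvI]; linarith)
      rw [habs, hvE, hvI, abs_of_nonneg (by linarith)] at h1 h2
      have hfg0 : f g = 0 := le_antisymm (by linarith) (hf g)
      have := h2 (by linarith)
      have hcard : (X₁.erase g).card < X₁.card := Finset.card_erase_lt_of_mem hg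
      omega
    · push_neg at hc
      obtain ⟨h1, _⟩ := hmin (insert g X₂) (X₁.erase g) (by rw [Finset.union_comm]; exact hunion)
        hdisj'.symm (by rw [hvE, hvI]; linarith)
      rw [habs, hvE, hvI, abs_of_nonneg (by linarith)] at h1
      linarith [hf g]
  · intro g hg
    have hsub : v (X₂.erase g) ≤ v X₂ := by
      rw [hadd, hadd]
      exact Finset.sum_le_sum_of_subset_of_nonneg (Finset.erase_subset g X₂)
        (fun x _ _ => hf x)
    linarith
end

section
/- Let v : 2^M → ℝ≥0 be a monotone subadditive valuation with v(M) = 1, and let (A₁, A₂) be a partition of M that is an EFX partition for v with v(A₁) ≥ v(A₂). If v(A₁) > 2·v(A₂), then A₁ consists of a single item and v(A₁) > 1/2. -/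
/-- For a monotone subadditive valuation with `v M = 1` and an EFX partition
`(A₁, A₂)` with `v A₁ ≥ v A₂`: if `v A₁ > 2 · v A₂`, then `A₁` is a single
item and `v A₁ > 1/2`. -/
theorem stmt_10 {α : Type*} [Fintype α] [DecidableEq α] (v : Finset α → ℝ)
    (hnn : ∀ S, 0 ≤ v S) (hmono : ∀ S T : Finset α, S ⊆ T → v S ≤ v T)
    (hsub : ∀ S T : Finset α, v (S ∪ T) ≤ v S + v T)
    (hM : v Finset.univ = 1)
    (A₁ A₂ : Finset α) (hpart : A₁ ∪ A₂ = Finset.univ) (hdisj : Disjoint A₁ A₂)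
    (hEFX₁ : ∀ g ∈ A₂, v (A₂.erase g) ≤ v A₁)
    (hEFX₂ : ∀ g ∈ A₁, v (A₁.erase g) ≤ v A₂)
    (hord : v A₂ ≤ v A₁)
    (hgt : 2 * v A₂ < v A₁) :
    A₁.card = 1 ∧ 1 / 2 < v A₁ := by
  have hA2 := hnn A₂
  have hcard : A₁.card = 1 := by
    rcases Nat.lt_trichotomy A₁.card 1 with h | h | h
    · -- A₁ empty
      interval_cases h' : A₁.card
      rw [Finset.card_eq_zero] at h'
      have : v A₁ ≤ v A₂ := hmono _ _ (h' ▸ Finset.empty_subset _)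
      linarith
    · exact h
    · -- two distinct elements
      obtain ⟨g, hg, g', hg', hne⟩ := Finset.one_lt_card.mp h
      have h1 : v A₁ ≤ v (A₁.erase g) + v {g} := by
        have := hsub (A₁.erase g) {g}
        have heq : A₁.erase g ∪ {g} = A₁ := by
          rw [Finset.union_comm, ← Finset.insert_eq, Finset.insert_erase hg]
        rwa [heq] at this
      have h2 : v {g} ≤ v (A₁.erase g') :=
        hmono _ _ (Finset.singleton_subset_iff.mpr (Finset.mem_erase.mpr ⟨hne, hg⟩))
      have h3 := hEFX₂ g hg
      have h4 := hEFX₂ g' hg'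
      linarith
  refine ⟨hcard, ?_⟩
  have h1 : (1 : ℝ) ≤ v A₁ + v A₂ := by
    have := hsub A₁ A₂
    rw [hpart, hM] at this
    linarith
  linarith
end

section
/- Consider two agents with the submodular valuations on {a, b, c} given by v₁(a)=1/2+ε, v₁(b)=v₁(c)=1/2, v₁(ab)=1, v₁(ac)=1/2+ε, v₁(bc)=v₁(abc)=1 and symmetrically v₂(b)=1/2+ε, v₂(a)=v₂(c)=1/2, v₂(ab)=1, v₂(bc)=1/2+ε, v₂(ac)=v₂(abc)=1, for 0 < ε < 1/2. Then the only EFX allocations are X¹ = ({a},{b,c}) and X² = ({a,c},{b}), and for any mixture choosing X¹ with probability p: max(E[v₁(X₂)], E[v₂(X₁)]) = max(p + (1−p)/2, p/2 + (1−p)) ≥ 3/4, while E[v₁(X₁)] = E[v₂(X₂)] = 1/2 + ε. Hence for α > (1/2 + ε)/(3/4), no distribution over EFX allocations is ex-ante α-EF. -/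
/-- The two-agent submodular impossibility instance on items `a = 0`, `b = 1`,
`c = 2`: the only EFX allocations give agent 1 the bundle `{a}` or `{a, c}`,
and for any mixture choosing `({a}, {b,c})` with probability `p`, the maximum
expected envy `max(p + (1-p)/2, p/2 + (1-p))` is at least `3/4` while each
agent's expected own value is `1/2 + ε`; hence no distribution over EFX
allocations is ex-ante `α`-EF for `α > (1/2 + ε)/(3/4)`. -/
theorem stmt_16 (ε : ℝ) (hε0 : 0 < ε) (hε1 : ε < 1 / 2)
    (v₁ v₂ : Finset (Fin 3) → ℝ)
    (h1e : v₁ ∅ = 0) (h1a : v₁ {0} = 1 / 2 + ε) (h1b : v₁ {1} = 1 / 2)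
    (h1c : v₁ {2} = 1 / 2) (h1ab : v₁ {0, 1} = 1) (h1ac : v₁ {0, 2} = 1 / 2 + ε)
    (h1bc : v₁ {1, 2} = 1) (h1abc : v₁ {0, 1, 2} = 1)
    (h2e : v₂ ∅ = 0) (h2a : v₂ {0} = 1 / 2) (h2b : v₂ {1} = 1 / 2 + ε)
    (h2c : v₂ {2} = 1 / 2) (h2ab : v₂ {0, 1} = 1) (h2ac : v₂ {0, 2} = 1)
    (h2bc : v₂ {1, 2} = 1 / 2 + ε) (h2abc : v₂ {0, 1, 2} = 1) :
    -- (1) the EFX allocations (A, Aᶜ) are exactly ({a},{b,c}) and ({a,c},{b})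
    (∀ A : Finset (Fin 3),
      ((∀ g ∈ Aᶜ, v₁ (Aᶜ.erase g) ≤ v₁ A) ∧
        (∀ g ∈ A, v₂ (A.erase g) ≤ v₂ Aᶜ)) ↔
      (A = {0} ∨ A = {0, 2})) ∧
    -- (2) any mixture choosing ({a},{b,c}) with probability p
    (∀ p : ℝ, 0 ≤ p → p ≤ 1 →
      p * v₁ {1, 2} + (1 - p) * v₁ {1} = p + (1 - p) / 2 ∧
      p * v₂ {0} + (1 - p) * v₂ {0, 2} = p / 2 + (1 - p) ∧
      3 / 4 ≤ max (p + (1 - p) / 2) (p / 2 + (1 - p)) ∧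
      p * v₁ {0} + (1 - p) * v₁ {0, 2} = 1 / 2 + ε ∧
      p * v₂ {1, 2} + (1 - p) * v₂ {1} = 1 / 2 + ε ∧
      ∀ α : ℝ, (1 / 2 + ε) / (3 / 4) < α →
        ¬(α * (p * v₁ {1, 2} + (1 - p) * v₁ {1}) ≤
            p * v₁ {0} + (1 - p) * v₁ {0, 2} ∧
          α * (p * v₂ {0} + (1 - p) * v₂ {0, 2}) ≤
            p * v₂ {1, 2} + (1 - p) * v₂ {1})) := by

  constructor
  · intro A
    have hA : A = ∅ ∨ A = {0} ∨ A = {1} ∨ A = {2} ∨ A = {0,1} ∨ A = {0,2} ∨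
        A = {1,2} ∨ A = {0,1,2} := by revert A; decide
    constructor
    · rintro ⟨hx, hy⟩
      rcases hA with h|h|h|h|h|h|h|h <;> subst h
      · exfalso
        have := hx 0 (by decide)
        rw [show (∅ᶜ : Finset (Fin 3)) = {0,1,2} from by decide,
          show ({0,1,2} : Finset (Fin 3)).erase 0 = {1,2} from by decide] at this
        rw [h1bc, h1e] at this; linarith
      · left; rfl
      · exfalso
        have := hx 2 (by decide)
        rw [show ({1}ᶜ : Finset (Fin 3)) = {0,2} from by decide,
          show ({0,2} : Finset (Fin 3)).erase 2 = {0} from by decide] at this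
        rw [h1a, h1b] at this; linarith
      · exfalso
        have := hx 1 (by decide)
        rw [show ({2}ᶜ : Finset (Fin 3)) = {0,1} from by decide,
          show ({0,1} : Finset (Fin 3)).erase 1 = {0} from by decide] at this
        rw [h1a, h1c] at this; linarith
      · exfalso
        have := hy 0 (by decide)
        rw [show ({0,1}ᶜ : Finset (Fin 3)) = {2} from by decide,
          show ({0,1} : Finset (Fin 3)).erase 0 = {1} from by decide] at this
        rw [h2b, h2c] at this; linarith
      · right; rfl
      · exfalso
        have := hy 2 (by decide)
        rw [show ({1,2}ᶜ : Finset (Fin 3)) = {0} from by decide,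
          show ({1,2} : Finset (Fin 3)).erase 2 = {1} from by decide] at this
        rw [h2a, h2b] at this; linarith
      · exfalso
        have := hy 2 (by decide)
        rw [show ({0,1,2}ᶜ : Finset (Fin 3)) = ∅ from by decide,
          show ({0,1,2} : Finset (Fin 3)).erase 2 = {0,1} from by decide] at this
        rw [h2ab, h2e] at this; linarith
    · rintro (h|h) <;> subst h
      · refine ⟨?_, ?_⟩
        · intro g hg
          rw [show ({0}ᶜ : Finset (Fin 3)) = {1,2} from by decide] at hg ⊢
          fin_cases hg
          · rw [show ({1,2} : Finset (Fin 3)).erase 1 = {2} from by decide,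
              h1c, h1a]; linarith
          · rw [show ({1,2} : Finset (Fin 3)).erase 2 = {1} from by decide,
              h1b, h1a]; linarith
        · intro g hg
          rw [show ({0}ᶜ : Finset (Fin 3)) = {1,2} from by decide]
          fin_cases hg
          rw [show ({0} : Finset (Fin 3)).erase 0 = ∅ from by decide, h2e, h2bc]
          linarith
      · refine ⟨?_, ?_⟩
        · intro g hg
          rw [show ({0,2}ᶜ : Finset (Fin 3)) = {1} from by decide] at hg ⊢
          fin_cases hg
          rw [show ({1} : Finset (Fin 3)).erase 1 = ∅ from by decide, h1e, h1ac]
          linarith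
        · intro g hg
          rw [show ({0,2}ᶜ : Finset (Fin 3)) = {1} from by decide]
          fin_cases hg
          · rw [show ({0,2} : Finset (Fin 3)).erase 0 = {2} from by decide,
              h2c, h2b]; linarith
          · rw [show ({0,2} : Finset (Fin 3)).erase 2 = {0} from by decide,
              h2a, h2b]; linarith
  · intro p hp0 hp1
    rw [h1bc, h1b, h2a, h2ac, h1a, h1ac, h2bc, h2b]
    refine ⟨by ring, by ring, ?_, by ring, by ring, ?_⟩
    · rcases le_total p (1/2) with h | h
      · exact le_max_of_le_right (by linarith)
      · exact le_max_of_le_left (by linarith)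
    · intro α hα ⟨ha, hb⟩
      have h34 : (1 / 2 + ε) / (3 / 4) = 2 / 3 + 4 / 3 * ε := by ring
      rw [h34] at hα
      nlinarith [ha, hb, hα]
end

section
/- In the deterministic envy cycles procedure, assigning an unallocated item g to an unenvied agent j preserves 1/2-EFX and EF1 for subadditive valuations: if X is a partial allocation with v_i(X_i) ≥ v_i(X_j) for all i ≠ j, v_i(X_i) ≥ v_i({g}) for all i, and X is 1/2-EFX and EF1, then the allocation X' with X'_j = X_j + g and X'_i = X_i for i ≠ j is also 1/2-EFX and EF1. -/
/-- Assigning an unallocated item `g` to an unenvied agent `j` preserves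
`1/2`-EFX and EF1 for monotone subadditive valuations. -/
theorem stmt_17 {n : ℕ} {ι : Type*} [DecidableEq ι]
    (v : Fin n → Finset ι → ℝ)
    (hnn : ∀ i S, 0 ≤ v i S)
    (hmono : ∀ i, ∀ S T : Finset ι, S ⊆ T → v i S ≤ v i T)
    (hsub : ∀ i, ∀ S T : Finset ι, v i (S ∪ T) ≤ v i S + v i T)
    (X : Fin n → Finset ι) (hdisj : ∀ i k, i ≠ k → Disjoint (X i) (X k))
    (j : Fin n) (g : ι) (hg : ∀ i, g ∉ X i)
    (hunenvied : ∀ i, i ≠ j → v i (X j) ≤ v i (X i))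
    (hsep : ∀ i, v i {g} ≤ v i (X i))
    (hEFX : ∀ i k, ∀ h ∈ X k, (1 / 2) * v i ((X k).erase h) ≤ v i (X i))
    (hEF1 : ∀ i k, X k ≠ ∅ → ∃ h ∈ X k, v i ((X k).erase h) ≤ v i (X i))
    (X' : Fin n → Finset ι) (hX' : X' = Function.update X j (insert g (X j))) :
    (∀ i k, ∀ h ∈ X' k, (1 / 2) * v i ((X' k).erase h) ≤ v i (X' i)) ∧
      (∀ i k, X' k ≠ ∅ → ∃ h ∈ X' k, v i ((X' k).erase h) ≤ v i (X' i)) := by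
  subst hX'
  -- no agent envies j (including j itself)
  have hnoenvy : ∀ i, v i (X j) ≤ v i (X i) := by
    intro i
    by_cases hij : i = j
    · subst hij; exact le_refl _
    · exact hunenvied i hij
  -- old bundles are below new bundles
  have hup : ∀ i, v i (X i) ≤ v i (Function.update X j (insert g (X j)) i) := by
    intro i
    by_cases hij : i = j
    · subst hij
      simp only [Function.update_self]
      exact hmono i _ _ (Finset.subset_insert _ _)
    · simp only [Function.update_of_ne hij]
      exact le_refl _
  have hkeq : ∀ k, k ≠ j → Function.update X j (insert g (X j)) k = X k := by
    intro k hk; simp [Function.update_of_ne hk]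
  constructor
  · intro i k h hh
    by_cases hkj : k = j
    · rw [hkj] at hh ⊢
      rw [Function.update_self] at hh ⊢
      -- (insert g (X j)).erase h ⊆ X j ∪ {g}
      have hsubset : (insert g (X j)).erase h ⊆ X j ∪ {g} := by
        intro x hx
        have hx' := Finset.mem_of_mem_erase hx
        rcases Finset.mem_insert.mp hx' with h1 | h1
        · exact Finset.mem_union_right _ (by simp [h1])
        · exact Finset.mem_union_left _ h1
      have h1 : v i ((insert g (X j)).erase h) ≤ v i (X j ∪ {g}) :=
        hmono i _ _ hsubset
      have h2 : v i (X j ∪ {g}) ≤ v i (X j) + v i {g} := hsub i _ _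
      have h3 : v i (X j) + v i {g} ≤ v i (X i) + v i (X i) :=
        add_le_add (hnoenvy i) (hsep i)
      have : (1 / 2) * v i ((insert g (X j)).erase h) ≤ v i (X i) := by
        nlinarith [hnn i ((insert g (X j)).erase h)]
      exact this.trans (hup i)
    · rw [hkeq k hkj] at hh ⊢
      exact (hEFX i k h hh).trans (hup i)
  · intro i k hk
    by_cases hkj : k = j
    · rw [hkj] at hk ⊢
      rw [Function.update_self] at hk ⊢
      refine ⟨g, Finset.mem_insert_self _ _, ?_⟩
      rw [Finset.erase_insert (hg j)]
      exact (hnoenvy i).trans (hup i)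
    · rw [hkeq k hkj] at hk ⊢
      obtain ⟨h, hh, hle⟩ := hEF1 i k hk
      exact ⟨h, hh, hle.trans (hup i)⟩
end

section
/- Every envy cycle elimination step strictly decreases the number of edges in the envy graph: if X is an allocation whose envy graph contains a directed cycle C, and X' is obtained from X by reallocating bundles along C, then the number of edges of the envy graph of X' is strictly less than that of X. Consequently, between any two steps that assign a new item, at most n² − 1 consecutive cycle-elimination steps can occur. -/
/-!
Eliminating a cycle reallocates the bundles by a permutation `σ` under which no agent is worse
off and the first agent of the cycle strictly gains. Hence `(i, j) ↦ (i, σ j)` injects the envy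
edges after the step into those before it, and misses the edge `(u₁, u₂)`, whose preimage would
be the loop `(u₁, u₁)`. The envy graph has no loops, so it has at most `n² - n` edges, which
bounds the number of consecutive elimination steps.
-/

open scoped Classical

/-- `X'` is obtained from `X` by eliminating an envy cycle: there is an
injective cycle `u₁, …, u_k` of agents, each strictly envying the next one
(cyclically), each receiving the next agent's bundle, with all other bundles
unchanged. -/
def CycleElim {n : ℕ} {ι : Type*} (v : Fin n → Finset ι → ℝ)
    (X X' : Fin n → Finset ι) : Prop :=
  ∃ (k : ℕ) (hk : 0 < k) (u : Fin k → Fin n), Function.Injective u ∧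
    (∀ t : Fin k,
      v (u t) (X (u t)) < v (u t) (X (u ⟨(t.val + 1) % k, Nat.mod_lt _ hk⟩))) ∧
    (∀ t : Fin k, X' (u t) = X (u ⟨(t.val + 1) % k, Nat.mod_lt _ hk⟩)) ∧
    (∀ i, (∀ t, u t ≠ i) → X' i = X i)

/-- The set of edges of the envy graph of the allocation `X`. -/
noncomputable def envyEdges {n : ℕ} {ι : Type*} (v : Fin n → Finset ι → ℝ)
    (X : Fin n → Finset ι) : Finset (Fin n × Fin n) :=
  Finset.univ.filter fun p => v p.1 (X p.1) < v p.1 (X p.2)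

section EnvyGraph

variable {n : ℕ} {ι : Type*} {v : Fin n → Finset ι → ℝ}

lemma finRotate_apply_eq_mod {k : ℕ} (hk : 0 < k) (t : Fin k) :
    finRotate k t = ⟨(t.val + 1) % k, Nat.mod_lt _ hk⟩ := by
  have : NeZero k := ⟨hk.ne'⟩
  ext
  rw [finRotate_apply, Fin.val_add, Fin.val_one', Nat.add_mod_mod]

lemma CycleElim.exists_perm {X X' : Fin n → Finset ι} (h : CycleElim v X X') :
    ∃ σ : Equiv.Perm (Fin n), X' = X ∘ σ ∧ (∀ i, v i (X i) ≤ v i (X (σ i))) ∧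
      ∃ a, v a (X a) < v a (X (σ a)) := by
  obtain ⟨k, hk, u, hu, henvy, hmoved, hfixed⟩ := h
  set σ := (finRotate k).viaFintypeEmbedding ⟨u, hu⟩
  have hσu : ∀ t, σ (u t) = u ⟨(t.val + 1) % k, Nat.mod_lt _ hk⟩ := fun t => by
    rw [← finRotate_apply_eq_mod hk]
    exact Equiv.Perm.viaFintypeEmbedding_apply_image _ ⟨u, hu⟩ t
  have hσfix : ∀ i, (∀ t, u t ≠ i) → σ i = i := fun i hi =>
    Equiv.Perm.viaFintypeEmbedding_apply_notMem_range _ _ fun ⟨t, ht⟩ => hi t ht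
  have hX' : X' = X ∘ σ := funext fun i => by
    by_cases hi : ∃ t, u t = i
    · obtain ⟨t, rfl⟩ := hi
      rw [Function.comp_apply, hσu, hmoved]
    · push Not at hi
      rw [Function.comp_apply, hσfix i hi, hfixed i hi]
  refine ⟨σ, hX', fun i => ?_, u ⟨0, hk⟩, by rw [hσu]; exact henvy _⟩
  by_cases hi : ∃ t, u t = i
  · obtain ⟨t, rfl⟩ := hi
    rw [hσu]
    exact (henvy t).le
  · push Not at hi
    rw [hσfix i hi]

lemma card_envyEdges_comp_perm_lt (X : Fin n → Finset ι) (σ : Equiv.Perm (Fin n))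
    (hle : ∀ i, v i (X i) ≤ v i (X (σ i))) {a : Fin n} (ha : v a (X a) < v a (X (σ a))) :
    (envyEdges v (X ∘ σ)).card < (envyEdges v X).card := by
  set f := ((Equiv.refl (Fin n)).prodCongr σ).toEmbedding
  have hsub : (envyEdges v (X ∘ σ)).map f ⊂ envyEdges v X := by
    refine Finset.ssubset_iff_of_subset ?_ |>.mpr ⟨(a, σ a), ?_, ?_⟩
    · intro p hp
      obtain ⟨⟨i, j⟩, hij, rfl⟩ := Finset.mem_map.mp hp
      simp only [envyEdges, Finset.mem_filter, Finset.mem_univ, true_and] at hij ⊢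
      exact (hle i).trans_lt hij
    · simpa [envyEdges] using ha
    · simp [f, envyEdges]
  simpa only [Finset.card_map] using Finset.card_lt_card hsub

lemma CycleElim.card_envyEdges_lt {X X' : Fin n → Finset ι} (h : CycleElim v X X') :
    (envyEdges v X').card < (envyEdges v X).card := by
  obtain ⟨σ, rfl, hle, a, ha⟩ := h.exists_perm
  exact card_envyEdges_comp_perm_lt X σ hle ha

lemma card_envyEdges_le (X : Fin n → Finset ι) : (envyEdges v X).card ≤ n * n - n := by
  have hsub : envyEdges v X ⊆ (Finset.univ : Finset (Fin n)).offDiag := fun p hp => by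
    simp only [envyEdges, Finset.mem_filter] at hp
    simp only [Finset.mem_offDiag, Finset.mem_univ, true_and]
    intro hdiag
    rw [hdiag] at hp
    exact lt_irrefl _ hp.2
  simpa using Finset.card_le_card hsub

end EnvyGraph

lemma apply_add_le_apply_zero_of_forall_succ_lt {f : ℕ → ℕ} {m : ℕ}
    (hf : ∀ s < m, f (s + 1) < f s) : f m + m ≤ f 0 := by
  induction m with
  | zero => simp
  | succ m ih =>
    have := hf m m.lt_succ_self
    have := ih fun s hs => hf s (hs.trans m.lt_succ_self)
    omega

theorem stmt_19_general {n : ℕ} {ι : Type*}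
    (v : Fin n → Finset ι → ℝ) :
    (∀ X X' : Fin n → Finset ι, CycleElim v X X' →
      (envyEdges v X').card < (envyEdges v X).card) ∧
    (∀ (m : ℕ) (Y : ℕ → Fin n → Finset ι),
      (∀ s < m, CycleElim v (Y s) (Y (s + 1))) → m ≤ n ^ 2 - 1) := by
  refine ⟨fun X X' h => h.card_envyEdges_lt, fun m Y hY => ?_⟩
  have hm : (envyEdges v (Y m)).card + m ≤ (envyEdges v (Y 0)).card :=
    apply_add_le_apply_zero_of_forall_succ_lt (f := fun s => (envyEdges v (Y s)).card)
      fun s hs => (hY s hs).card_envyEdges_lt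
  have hdiag : n * n - n ≤ n ^ 2 - 1 := by
    rcases n.eq_zero_or_pos with rfl | hn
    · rfl
    · exact sq n ▸ Nat.sub_le_sub_left hn _
  have := card_envyEdges_le (v := v) (Y 0)
  omega

/-- Every envy cycle elimination step strictly decreases the number of edges of
the envy graph; consequently at most `n² − 1` consecutive cycle-elimination
steps can occur. -/
theorem stmt_19 {n : ℕ} {ι : Type*}
    (v : Fin n → Finset ι → ℝ)
    (hmono : ∀ i, ∀ S T : Finset ι, S ⊆ T → v i S ≤ v i T) :
    (∀ X X' : Fin n → Finset ι, CycleElim v X X' →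
      (envyEdges v X').card < (envyEdges v X).card) ∧
    (∀ (m : ℕ) (Y : ℕ → Fin n → Finset ι),
      (∀ s < m, CycleElim v (Y s) (Y (s + 1))) → m ≤ n ^ 2 - 1) :=
  stmt_19_general v
end
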